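/- Let a > 0 and b > 0 be real numbers. For every x > 0, the function F(x) = (√π/(4a)) [ e^{2ab} · erf(a x + b/x) + e^{−2ab} · erf(a x − b/x) ] is differentiable at x with derivative F′(x) = e^{−a²x² − b²/x²}. -/

import Mathlib

open Real

noncomputable def erf (z : ℝ) : ℝ := (2 / Real.sqrt π) * ∫ t in (0:ℝ)..z, Real.exp (-t ^ 2)

/-! Since `(a x ± b / x)² = a² x² + b² / x² ± 2ab`, after the chain rule both
terms carry the same Gaussian factor `exp (-a² x² - b² / x²)`, and the inner derivatives
`a - b / x²` and `a + b / x²` add up to `2a`. -/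

theorem hasDerivAt_erf (z : ℝ) : HasDerivAt erf (2 / Real.sqrt π * Real.exp (-z ^ 2)) z :=
  ((by fun_prop : Continuous fun t : ℝ => Real.exp (-t ^ 2)).integral_hasStrictDerivAt 0 z)
    |>.hasDerivAt.const_mul _

theorem hasDerivAt_mul_add_div (a b : ℝ) {x : ℝ} (hx : x ≠ 0) :
    HasDerivAt (fun x : ℝ => a * x + b / x) (a - b / x ^ 2) x := by
  refine (((hasDerivAt_id x).const_mul a).add ((hasDerivAt_inv hx).const_mul b)).congr_deriv ?_
  field_simp
  ring

theorem hasDerivAt_mul_sub_div (a b : ℝ) {x : ℝ} (hx : x ≠ 0) :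
    HasDerivAt (fun x : ℝ => a * x - b / x) (a + b / x ^ 2) x := by
  simpa only [neg_div, sub_eq_add_neg, neg_neg] using hasDerivAt_mul_add_div a (-b) hx

theorem exp_mul_exp_neg_sq_mul_add_div (a b : ℝ) {x : ℝ} (hx : x ≠ 0) :
    Real.exp (2 * a * b) * Real.exp (-(a * x + b / x) ^ 2)
      = Real.exp (-(a ^ 2 * x ^ 2) - b ^ 2 / x ^ 2) := by
  rw [← Real.exp_add]
  congr 1
  field_simp
  ring

theorem exp_mul_exp_neg_sq_mul_sub_div (a b : ℝ) {x : ℝ} (hx : x ≠ 0) :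
    Real.exp (-(2 * a * b)) * Real.exp (-(a * x - b / x) ^ 2)
      = Real.exp (-(a ^ 2 * x ^ 2) - b ^ 2 / x ^ 2) := by
  simpa only [neg_div, sub_eq_add_neg, neg_neg, mul_neg, neg_sq, div_pow]
    using exp_mul_exp_neg_sq_mul_add_div a (-b) hx

theorem hasDerivAt_erf_combination (a b : ℝ) (ha : 0 < a) (x : ℝ) (hx : 0 < x) :
    HasDerivAt
      (fun x : ℝ => (Real.sqrt π / (4 * a)) *
        (Real.exp (2 * a * b) * erf (a * x + b / x)
          + Real.exp (-(2 * a * b)) * erf (a * x - b / x)))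
      (Real.exp (-(a ^ 2 * x ^ 2) - b ^ 2 / x ^ 2)) x := by
  have hplus := ((hasDerivAt_erf _).comp x (hasDerivAt_mul_add_div a b hx.ne')).const_mul
    (Real.exp (2 * a * b))
  have hminus := ((hasDerivAt_erf _).comp x (hasDerivAt_mul_sub_div a b hx.ne')).const_mul
    (Real.exp (-(2 * a * b)))
  refine ((hplus.add hminus).const_mul (Real.sqrt π / (4 * a))).congr_deriv ?_
  calc _ = Real.sqrt π / (4 * a) * (2 / Real.sqrt π)
          * (Real.exp (2 * a * b) * Real.exp (-(a * x + b / x) ^ 2) * (a - b / x ^ 2)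
            + Real.exp (-(2 * a * b)) * Real.exp (-(a * x - b / x) ^ 2) * (a + b / x ^ 2)) := by
        ring
    _ = Real.sqrt π / (4 * a) * (2 / Real.sqrt π)
          * (Real.exp (-(a ^ 2 * x ^ 2) - b ^ 2 / x ^ 2) * (a - b / x ^ 2)
            + Real.exp (-(a ^ 2 * x ^ 2) - b ^ 2 / x ^ 2) * (a + b / x ^ 2)) := by
        rw [exp_mul_exp_neg_sq_mul_add_div a b hx.ne', exp_mul_exp_neg_sq_mul_sub_div a b hx.ne']
    _ = _ := by
        field_simp
        ring
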